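/- For n ≥ 4, let K⁺ be the graph obtained from the complete bipartite graph K_{⌈n/2⌉,⌊n/2⌋} by adding one edge inside the part of size ⌈n/2⌉. Then λ(K⁺)² > ⌊n²/4⌋ + 2. -/

import Mathlib

open Finset Matrix
open scoped RealInnerProductSpace


lemma sum_split3 (p n : ℕ) (h2 : 2 ≤ p) (hpn : p ≤ n) (f : ℕ → ℝ) :
    ∑ i ∈ Finset.range n, f i =
      (∑ i ∈ Finset.range 2, f i) + (∑ i ∈ Finset.Ico 2 p, f i) + (∑ i ∈ Finset.Ico p n, f i) := by
  rw [Finset.range_eq_Ico, ← Finset.sum_Ico_consecutive f (by omega : 0 ≤ p) hpn,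
    ← Finset.sum_Ico_consecutive f (by omega : (0:ℕ) ≤ 2) h2]
  rw [Finset.range_eq_Ico]

lemma sum_const_Ico (a c : ℕ) (h : a ≤ c) (f : ℕ → ℝ) (v : ℝ)
    (hf : ∀ i, a ≤ i → i < c → f i = v) :
    ∑ i ∈ Finset.Ico a c, f i = ((c:ℝ) - a) * v := by
  have : ∀ i ∈ Finset.Ico a c, f i = v := by
    intro i hi; rw [Finset.mem_Ico] at hi; exact hf i hi.1 hi.2
  rw [Finset.sum_congr rfl this, Finset.sum_const, Nat.card_Ico, nsmul_eq_mul, Nat.cast_sub h]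

lemma norm_sum (p q n : ℕ) (hp : 2 ≤ p) (hq : 2 ≤ q) (hn : n = p + q) (t b s : ℝ) :
    ∑ i ∈ Finset.range n,
      (if i ≤ 1 then t else if i < p then b else s) * (if i ≤ 1 then t else if i < p then b else s)
      = 2*t^2 + ((p:ℝ)-2)*b^2 + (q:ℝ)*s^2 := by
  rw [sum_split3 p n hp (by omega)]
  rw [Finset.sum_range_succ, Finset.sum_range_one,
    if_pos (by omega : (0:ℕ) ≤ 1), if_pos (by omega : (1:ℕ) ≤ 1)]
  rw [sum_const_Ico 2 p hp _ (b*b) (fun i h1 h2 => by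
    rw [if_neg (by omega), if_pos (by omega)])]
  rw [sum_const_Ico p n (by omega) _ (s*s) (fun i h1 h2 => by
    rw [if_neg (by omega), if_neg (by omega)])]
  have : ((n:ℝ) - p) = q := by
    have : (n:ℝ) = (p:ℝ) + q := by subst hn; push_cast; ring
    linarith
  rw [this]; ring

lemma Kplus_inner_sum (p q n : ℕ) (hp : 2 ≤ p) (hq : 2 ≤ q) (hn : n = p + q) (t b s : ℝ) (i : ℕ) :
    ∑ j ∈ Finset.range n,
      (if (i ≠ j ∧ (((i < p ∧ p ≤ j) ∨ (i ≤ 1 ∧ j ≤ 1)) ∨ ((j < p ∧ p ≤ i) ∨ (j ≤ 1 ∧ i ≤ 1))))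
        then (1:ℝ) else 0) * (if j ≤ 1 then t else if j < p then b else s)
      = (if i ≤ 1 then t + (q:ℝ)*s else if i < p then (q:ℝ)*s else 2*t + ((p:ℝ)-2)*b) := by
  have hnpq : ((n:ℝ) - p) = q := by subst hn; push_cast; ring
  rw [sum_split3 p n hp (by omega)]
  rw [Finset.sum_range_succ, Finset.sum_range_one]
  by_cases hi1 : i ≤ 1
  · rw [sum_const_Ico 2 p hp _ 0 (fun j h1 h2 => by
      split_ifs <;> (first | ring1 | (exfalso; omega)))]
    rw [sum_const_Ico p n (by omega) _ s (fun j h1 h2 => by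
      split_ifs <;> (first | ring1 | (exfalso; omega)))]
    rw [hnpq]
    split_ifs <;> (first | ring1 | (exfalso; omega))
  · by_cases hip : i < p
    · rw [sum_const_Ico 2 p hp _ 0 (fun j h1 h2 => by
        split_ifs <;> (first | ring1 | (exfalso; omega)))]
      rw [sum_const_Ico p n (by omega) _ s (fun j h1 h2 => by
        split_ifs <;> (first | ring1 | (exfalso; omega)))]
      rw [hnpq]
      split_ifs <;> (first | ring1 | (exfalso; omega))
    · rw [sum_const_Ico 2 p hp _ b (fun j h1 h2 => by
        split_ifs <;> (first | ring1 | (exfalso; omega)))]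
      rw [sum_const_Ico p n (by omega) _ 0 (fun j h1 h2 => by
        split_ifs <;> (first | ring1 | (exfalso; omega)))]
      split_ifs <;> (first | ring1 | (exfalso; omega))

lemma quad_sum (p q n : ℕ) (hp : 2 ≤ p) (hq : 2 ≤ q) (hn : n = p + q) (t b s : ℝ) :
    ∑ i ∈ Finset.range n, (∑ j ∈ Finset.range n,
      (if (i ≠ j ∧ (((i < p ∧ p ≤ j) ∨ (i ≤ 1 ∧ j ≤ 1)) ∨ ((j < p ∧ p ≤ i) ∨ (j ≤ 1 ∧ i ≤ 1))))
        then (1:ℝ) else 0) * (if j ≤ 1 then t else if j < p then b else s))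
      * (if i ≤ 1 then t else if i < p then b else s)
      = 2*t^2 + 4*(q:ℝ)*t*s + 2*((p:ℝ)-2)*(q:ℝ)*s*b := by
  have hnpq : ((n:ℝ) - p) = q := by subst hn; push_cast; ring
  have hcongr : ∀ i ∈ Finset.range n, (∑ j ∈ Finset.range n,
      (if (i ≠ j ∧ (((i < p ∧ p ≤ j) ∨ (i ≤ 1 ∧ j ≤ 1)) ∨ ((j < p ∧ p ≤ i) ∨ (j ≤ 1 ∧ i ≤ 1))))
        then (1:ℝ) else 0) * (if j ≤ 1 then t else if j < p then b else s))
      * (if i ≤ 1 then t else if i < p then b else s)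
      = (if i ≤ 1 then t + (q:ℝ)*s else if i < p then (q:ℝ)*s else 2*t + ((p:ℝ)-2)*b)
        * (if i ≤ 1 then t else if i < p then b else s) := by
    intro i _
    rw [Kplus_inner_sum p q n hp hq hn t b s i]
  rw [Finset.sum_congr rfl hcongr]
  rw [sum_split3 p n hp (by omega)]
  rw [Finset.sum_range_succ, Finset.sum_range_one]
  rw [sum_const_Ico 2 p hp _ ((q:ℝ)*s*b) (fun i h1 h2 => by
    split_ifs <;> (first | ring1 | (exfalso; omega)))]
  rw [sum_const_Ico p n (by omega) _ ((2*t + ((p:ℝ)-2)*b)*s) (fun i h1 h2 => by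
    split_ifs <;> (first | ring1 | (exfalso; omega)))]
  rw [hnpq]
  split_ifs <;> (first | ring1 | (exfalso; omega))


lemma even_poly (m : ℝ) (hm : 2 ≤ m) :
    (m^2+2) * (2*(m^2+m+1)^2+(m-2)*(m^2)^2+m*(m^2+1)^2)^2
      < (2*(m^2+m+1)^2+4*m*(m^2+m+1)*(m^2+1)+2*(m-2)*m*(m^2+1)*(m^2))^2 := by
  obtain ⟨k, hk, rfl⟩ : ∃ k : ℝ, 0 ≤ k ∧ m = k + 2 := ⟨m - 2, by linarith, by ring⟩
  nlinarith [pow_nonneg hk 2, pow_nonneg hk 3, pow_nonneg hk 4, pow_nonneg hk 5,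
    pow_nonneg hk 6, pow_nonneg hk 7, pow_nonneg hk 8, pow_nonneg hk 9, hk]

lemma odd_poly (m : ℝ) (hm : 2 ≤ m) :
    (m*(m+1)+2) * (2*(2*m*((2*m+1)^2+2*(2*m+1)+4))^2+(m-1)*(2*m*(2*m+1)^2)^2+m*((2*m+1)^3)^2)^2
      < (2*(2*m*((2*m+1)^2+2*(2*m+1)+4))^2
          + 4*m*(2*m*((2*m+1)^2+2*(2*m+1)+4))*((2*m+1)^3)
          + 2*(m-1)*m*((2*m+1)^3)*(2*m*(2*m+1)^2))^2 := by
  obtain ⟨k, hk, rfl⟩ : ∃ k : ℝ, 0 ≤ k ∧ m = k + 2 := ⟨m - 2, by linarith, by ring⟩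
  nlinarith [pow_nonneg hk 2, pow_nonneg hk 3, pow_nonneg hk 4, pow_nonneg hk 5,
    pow_nonneg hk 6, pow_nonneg hk 7, pow_nonneg hk 8, pow_nonneg hk 9,
    pow_nonneg hk 10, pow_nonneg hk 11, pow_nonneg hk 12, pow_nonneg hk 13, hk]


open scoped Classical in
lemma rayleigh_lb (n : ℕ) (hn : 4 ≤ n)
    (G : SimpleGraph (Fin n))
    (hG : G = SimpleGraph.fromRel
      (fun u v => (u.val < (n + 1) / 2 ∧ (n + 1) / 2 ≤ v.val) ∨ (u.val ≤ 1 ∧ v.val ≤ 1)))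
    (l : ℝ)
    (hmax : ∀ μ : ℝ, Module.End.HasEigenvalue (Matrix.toLin' (G.adjMatrix ℝ)) μ → μ ≤ l)
    (t b s : ℝ)
    (S D : ℝ)
    (hS : S = ∑ i ∈ Finset.range n, (∑ j ∈ Finset.range n,
      (if (i ≠ j ∧ (((i < (n+1)/2 ∧ (n+1)/2 ≤ j) ∨ (i ≤ 1 ∧ j ≤ 1)) ∨
          ((j < (n+1)/2 ∧ (n+1)/2 ≤ i) ∨ (j ≤ 1 ∧ i ≤ 1))))
        then (1:ℝ) else 0) * (if j ≤ 1 then t else if j < (n+1)/2 then b else s))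
      * (if i ≤ 1 then t else if i < (n+1)/2 then b else s))
    (hD : D = ∑ i ∈ Finset.range n,
      (if i ≤ 1 then t else if i < (n+1)/2 then b else s)
        * (if i ≤ 1 then t else if i < (n+1)/2 then b else s))
    (hDpos : 0 < D) :
    S / D ≤ l := by
  haveI : NeZero n := ⟨by omega⟩
  -- the adjacency matrix is hermitian
  have hA : (G.adjMatrix ℝ).IsHermitian := by
    rw [Matrix.IsHermitian, Matrix.conjTranspose_eq_transpose_of_trivial]
    exact SimpleGraph.isSymm_adjMatrix G
  have hsym : (Matrix.toEuclideanLin (G.adjMatrix ℝ)).IsSymmetric :=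
    Matrix.isHermitian_iff_isSymmetric.mp hA
  haveI : Nontrivial (EuclideanSpace ℝ (Fin n)) := inferInstance
  set T := Matrix.toEuclideanLin (G.adjMatrix ℝ) with hT
  have hev := hsym.hasEigenvalue_iSup_of_finiteDimensional
  set μ : ℝ := (⨆ x : { x : EuclideanSpace ℝ (Fin n) // x ≠ 0 },
      RCLike.re (inner ℝ (T x) (x : EuclideanSpace ℝ (Fin n)) : ℝ) / ‖(x : EuclideanSpace ℝ (Fin n))‖ ^ 2)
    with hμ
  -- transfer the eigenvalue to `toLin'`
  obtain ⟨v, hv⟩ := hev.exists_hasEigenvector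
  have hv1 : T v = μ • v := hv.apply_eq_smul
  have hev' : Module.End.HasEigenvalue (Matrix.toLin' (G.adjMatrix ℝ)) μ := by
    apply Module.End.hasEigenvalue_of_hasEigenvector
      (x := (WithLp.equiv 2 (Fin n → ℝ)) v)
    constructor
    · rw [Module.End.mem_eigenspace_iff]
      have := congrArg (WithLp.equiv 2 (Fin n → ℝ)) hv1
      simpa [hT] using this
    · simpa using hv.right
  have hμl : μ ≤ l := hmax μ hev'
  -- the test vector
  set xv : Fin n → ℝ := fun i => if i.val ≤ 1 then t else if i.val < (n+1)/2 then b else s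
    with hxv
  set x : EuclideanSpace ℝ (Fin n) := (WithLp.equiv 2 (Fin n → ℝ)).symm xv with hx
  have hDx : (inner ℝ x x : ℝ) = D := by
    rw [PiLp.inner_apply]
    simp only [RCLike.inner_apply, starRingEnd_apply, star_trivial, hx,
      WithLp.equiv_symm_apply, PiLp.toLp_apply]
    rw [hD]
    exact Fin.sum_univ_eq_sum_range
      (fun i => (if i ≤ 1 then t else if i < (n+1)/2 then b else s)
        * (if i ≤ 1 then t else if i < (n+1)/2 then b else s)) n
  have hxne : x ≠ 0 := by
    intro h
    have : (inner ℝ x x : ℝ) = 0 := by rw [h]; simp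
    rw [hDx] at this
    exact absurd this (ne_of_gt hDpos)
  -- adjacency entries
  have hadjm : ∀ i j : Fin n, (G.adjMatrix ℝ) i j
      = (if (i.val ≠ j.val ∧ (((i.val < (n+1)/2 ∧ (n+1)/2 ≤ j.val) ∨ (i.val ≤ 1 ∧ j.val ≤ 1)) ∨
          ((j.val < (n+1)/2 ∧ (n+1)/2 ≤ i.val) ∨ (j.val ≤ 1 ∧ i.val ≤ 1)))) then (1:ℝ) else 0) := by
    intro i j
    rw [SimpleGraph.adjMatrix_apply]
    have hadj : G.Adj i j ↔ (i.val ≠ j.val ∧ (((i.val < (n+1)/2 ∧ (n+1)/2 ≤ j.val) ∨ (i.val ≤ 1 ∧ j.val ≤ 1)) ∨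
          ((j.val < (n+1)/2 ∧ (n+1)/2 ≤ i.val) ∨ (j.val ≤ 1 ∧ i.val ≤ 1)))) := by
      subst hG
      rw [SimpleGraph.fromRel_adj]
      constructor
      · rintro ⟨hne, hr⟩; exact ⟨fun h => hne (Fin.ext h), hr⟩
      · rintro ⟨hne, hr⟩; exact ⟨fun h => hne (congrArg Fin.val h), hr⟩
    by_cases h : (i.val ≠ j.val ∧ (((i.val < (n+1)/2 ∧ (n+1)/2 ≤ j.val) ∨ (i.val ≤ 1 ∧ j.val ≤ 1)) ∨
          ((j.val < (n+1)/2 ∧ (n+1)/2 ≤ i.val) ∨ (j.val ≤ 1 ∧ i.val ≤ 1))))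
    · rw [if_pos h, if_pos (hadj.mpr h)]
    · rw [if_neg h, if_neg (fun hh => h (hadj.mp hh))]
  -- the quadratic form at x
  have hTxi : ∀ i : Fin n, (T x) i = ∑ j : Fin n, (G.adjMatrix ℝ) i j * xv j := by
    intro i
    have hTx : WithLp.equiv 2 (Fin n → ℝ) (T x)
        = (G.adjMatrix ℝ) *ᵥ xv := by
      rw [hT, hx]
      simp
    have := congrFun hTx i
    simpa [Matrix.mulVec, dotProduct] using this
  have hSx : (inner ℝ (T x) x : ℝ) = S := by
    rw [PiLp.inner_apply]
    simp only [RCLike.inner_apply, starRingEnd_apply, star_trivial]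
    rw [show (∑ i, x i * (T x) i) = ∑ i, (T x) i * x i from Finset.sum_congr rfl fun i _ => mul_comm _ _]
    calc ∑ i : Fin n, (T x) i * x i
        = ∑ i : Fin n, (∑ j ∈ Finset.range n,
            (if ((i:ℕ) ≠ j ∧ ((((i:ℕ) < (n+1)/2 ∧ (n+1)/2 ≤ j) ∨ ((i:ℕ) ≤ 1 ∧ j ≤ 1)) ∨
                ((j < (n+1)/2 ∧ (n+1)/2 ≤ (i:ℕ)) ∨ (j ≤ 1 ∧ (i:ℕ) ≤ 1))))
              then (1:ℝ) else 0) * (if j ≤ 1 then t else if j < (n+1)/2 then b else s))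
            * (if (i:ℕ) ≤ 1 then t else if (i:ℕ) < (n+1)/2 then b else s) := by
          refine Finset.sum_congr rfl fun i _ => ?_
          have hxi : x i = (if (i:ℕ) ≤ 1 then t else if (i:ℕ) < (n+1)/2 then b else s) := rfl
          rw [hxi, hTxi i]
          congr 1
          calc ∑ j : Fin n, (G.adjMatrix ℝ) i j * xv j
              = ∑ j : Fin n,
                (if ((i:ℕ) ≠ (j:ℕ) ∧ ((((i:ℕ) < (n+1)/2 ∧ (n+1)/2 ≤ (j:ℕ)) ∨ ((i:ℕ) ≤ 1 ∧ (j:ℕ) ≤ 1)) ∨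
                    (((j:ℕ) < (n+1)/2 ∧ (n+1)/2 ≤ (i:ℕ)) ∨ ((j:ℕ) ≤ 1 ∧ (i:ℕ) ≤ 1))))
                  then (1:ℝ) else 0) * (if (j:ℕ) ≤ 1 then t else if (j:ℕ) < (n+1)/2 then b else s) :=
                Finset.sum_congr rfl fun j _ => by rw [hadjm i j]
            _ = _ := Fin.sum_univ_eq_sum_range (fun j => (if ((i:ℕ) ≠ j ∧ ((((i:ℕ) < (n+1)/2 ∧ (n+1)/2 ≤ j) ∨ ((i:ℕ) ≤ 1 ∧ j ≤ 1)) ∨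
                ((j < (n+1)/2 ∧ (n+1)/2 ≤ (i:ℕ)) ∨ (j ≤ 1 ∧ (i:ℕ) ≤ 1))))
              then (1:ℝ) else 0) * (if j ≤ 1 then t else if j < (n+1)/2 then b else s)) n
      _ = S := by
          rw [hS]
          exact Fin.sum_univ_eq_sum_range (fun i => (∑ j ∈ Finset.range n,
            (if (i ≠ j ∧ (((i < (n+1)/2 ∧ (n+1)/2 ≤ j) ∨ (i ≤ 1 ∧ j ≤ 1)) ∨
                ((j < (n+1)/2 ∧ (n+1)/2 ≤ i) ∨ (j ≤ 1 ∧ i ≤ 1))))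
              then (1:ℝ) else 0) * (if j ≤ 1 then t else if j < (n+1)/2 then b else s))
            * (if i ≤ 1 then t else if i < (n+1)/2 then b else s)) n
  -- boundedness of the Rayleigh quotient
  have hbdd : BddAbove (Set.range fun z : {z : EuclideanSpace ℝ (Fin n) // z ≠ 0} =>
      RCLike.re (inner ℝ (T z) (z : EuclideanSpace ℝ (Fin n)) : ℝ) / ‖(z : EuclideanSpace ℝ (Fin n))‖ ^ 2) := by
    refine ⟨‖LinearMap.toContinuousLinearMap T‖, ?_⟩
    rintro y ⟨⟨z, hz⟩, rfl⟩
    simp only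
    have hz2 : (0:ℝ) < ‖z‖ ^ 2 := pow_pos (norm_pos_iff.mpr hz) 2
    rw [div_le_iff₀ hz2]
    have h1 : (inner ℝ (T z) z : ℝ) ≤ ‖T z‖ * ‖z‖ := real_inner_le_norm _ _
    have h2 : ‖T z‖ ≤ ‖LinearMap.toContinuousLinearMap T‖ * ‖z‖ :=
      (LinearMap.toContinuousLinearMap T).le_opNorm z
    have h3 : RCLike.re (inner ℝ (T z) z : ℝ) = (inner ℝ (T z) z : ℝ) := rfl
    rw [h3]
    nlinarith [norm_nonneg z, norm_nonneg (T z)]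
  have hnorm : ‖x‖ ^ 2 = D := by
    rw [← hDx]; exact (real_inner_self_eq_norm_sq x).symm
  have hle : S / D ≤ μ := by
    have h := le_ciSup hbdd (⟨x, hxne⟩ : {z : EuclideanSpace ℝ (Fin n) // z ≠ 0})
    simp only at h
    rw [hSx, hnorm] at h
    exact h
  exact le_trans hle hμl

set_option maxHeartbeats 1000000 in
open scoped Classical in
/-- For `n ≥ 4`, the graph `K⁺` obtained from `K_{⌈n/2⌉,⌊n/2⌋}` (parts
`{v : v < ⌈n/2⌉}` and its complement in `Fin n`) by adding the edge `{0,1}` inside the part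
of size `⌈n/2⌉` satisfies `λ(K⁺)² > ⌊n²/4⌋ + 2`. -/
theorem spectral_radius_sq_Kplus (n : ℕ) (hn : 4 ≤ n)
    (G : SimpleGraph (Fin n))
    (hG : G = SimpleGraph.fromRel
      (fun u v => (u.val < (n + 1) / 2 ∧ (n + 1) / 2 ≤ v.val) ∨ (u.val ≤ 1 ∧ v.val ≤ 1)))
    (l : ℝ)
    (hl : Module.End.HasEigenvalue (Matrix.toLin' (G.adjMatrix ℝ)) l)
    (hmax : ∀ μ : ℝ, Module.End.HasEigenvalue (Matrix.toLin' (G.adjMatrix ℝ)) μ → μ ≤ l) :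
    l ^ 2 > ((n ^ 2 / 4 : ℕ) : ℝ) + 2 := by
  have hp : 2 ≤ (n+1)/2 := by omega
  have hq : 2 ≤ n/2 := by omega
  have hnpq : n = (n+1)/2 + n/2 := by omega
  rcases Nat.even_or_odd n with he | ho
  · -- even case : n = 2 * m
    obtain ⟨m, hm⟩ := he
    have hm2 : 2 ≤ m := by omega
    have hpm : (n+1)/2 = m := by omega
    have hqm : n/2 = m := by omega
    have hN : (n^2/4 : ℕ) = m * m := by
      have h4 : n^2 = 4 * (m*m) := by subst hm; ring
      omega
    have hmr : (2:ℝ) ≤ (m:ℝ) := by exact_mod_cast hm2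
    set mr : ℝ := (m:ℝ) with hmrdef
    set t : ℝ := mr^2+mr+1 with ht
    set b : ℝ := mr^2 with hb
    set s : ℝ := mr^2+1 with hs
    have hSval := quad_sum ((n+1)/2) (n/2) n hp hq hnpq t b s
    have hDval := norm_sum ((n+1)/2) (n/2) n hp hq hnpq t b s
    have ecp : (((n+1)/2 : ℕ) : ℝ) = mr := by rw [hpm]
    have ecq : ((n/2 : ℕ) : ℝ) = mr := by rw [hqm]
    rw [ecp, ecq] at hSval hDval
    have hDpos : (0:ℝ) < 2*t^2+(mr-2)*b^2+mr*s^2 := by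
      rw [ht, hb, hs]; nlinarith [hmr, sq_nonneg mr]
    have hR : (2*t^2 + 4*mr*t*s + 2*(mr-2)*mr*s*b) / (2*t^2+(mr-2)*b^2+mr*s^2) ≤ l :=
      rayleigh_lb n hn G hG l hmax t b s _ _ hSval.symm hDval.symm hDpos
    have hSpos : (0:ℝ) < 2*t^2 + 4*mr*t*s + 2*(mr-2)*mr*s*b := by
      rw [ht, hb, hs]; nlinarith [hmr, sq_nonneg mr]
    have hRpos : (0:ℝ) < (2*t^2 + 4*mr*t*s + 2*(mr-2)*mr*s*b) / (2*t^2+(mr-2)*b^2+mr*s^2) :=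
      div_pos hSpos hDpos
    have hl2 : ((2*t^2 + 4*mr*t*s + 2*(mr-2)*mr*s*b) / (2*t^2+(mr-2)*b^2+mr*s^2))^2 ≤ l^2 :=
      pow_le_pow_left₀ (le_of_lt hRpos) hR 2
    have hkey : ((n^2/4 : ℕ):ℝ) + 2
        < ((2*t^2 + 4*mr*t*s + 2*(mr-2)*mr*s*b) / (2*t^2+(mr-2)*b^2+mr*s^2))^2 := by
      rw [hN, div_pow, lt_div_iff₀ (pow_pos hDpos 2)]
      push_cast
      have hpoly := even_poly mr hmr
      rw [ht, hb, hs]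
      nlinarith [hpoly]
    linarith
  · -- odd case : n = 2 * m + 1
    obtain ⟨m, hm⟩ := ho
    have hm2 : 2 ≤ m := by omega
    have hpm : (n+1)/2 = m+1 := by omega
    have hqm : n/2 = m := by omega
    have hN : (n^2/4 : ℕ) = m * (m+1) := by
      have h4 : n^2 = 4 * (m*(m+1)) + 1 := by subst hm; ring
      omega
    have hmr : (2:ℝ) ≤ (m:ℝ) := by exact_mod_cast hm2
    set mr : ℝ := (m:ℝ) with hmrdef
    set t : ℝ := 2*mr*((2*mr+1)^2+2*(2*mr+1)+4) with ht
    set b : ℝ := 2*mr*(2*mr+1)^2 with hb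
    set s : ℝ := (2*mr+1)^3 with hs
    have hSval := quad_sum ((n+1)/2) (n/2) n hp hq hnpq t b s
    have hDval := norm_sum ((n+1)/2) (n/2) n hp hq hnpq t b s
    have ecp : (((n+1)/2 : ℕ) : ℝ) = mr + 1 := by rw [hpm]; push_cast; ring
    have ecq : ((n/2 : ℕ) : ℝ) = mr := by rw [hqm]
    rw [ecp, ecq] at hSval hDval
    have hDpos : (0:ℝ) < 2*t^2+((mr+1)-2)*b^2+mr*s^2 := by
      rw [ht, hb, hs]; nlinarith [hmr, sq_nonneg mr, sq_nonneg (mr-1)]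
    have hR : (2*t^2 + 4*mr*t*s + 2*((mr+1)-2)*mr*s*b) / (2*t^2+((mr+1)-2)*b^2+mr*s^2) ≤ l :=
      rayleigh_lb n hn G hG l hmax t b s _ _ hSval.symm hDval.symm hDpos
    have hSpos : (0:ℝ) < 2*t^2 + 4*mr*t*s + 2*((mr+1)-2)*mr*s*b := by
      rw [ht, hb, hs]; nlinarith [hmr, sq_nonneg mr, sq_nonneg (mr-1)]
    have hRpos : (0:ℝ) < (2*t^2 + 4*mr*t*s + 2*((mr+1)-2)*mr*s*b) / (2*t^2+((mr+1)-2)*b^2+mr*s^2) :=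
      div_pos hSpos hDpos
    have hl2 : ((2*t^2 + 4*mr*t*s + 2*((mr+1)-2)*mr*s*b) / (2*t^2+((mr+1)-2)*b^2+mr*s^2))^2 ≤ l^2 :=
      pow_le_pow_left₀ (le_of_lt hRpos) hR 2
    have hkey : ((n^2/4 : ℕ):ℝ) + 2
        < ((2*t^2 + 4*mr*t*s + 2*((mr+1)-2)*mr*s*b) / (2*t^2+((mr+1)-2)*b^2+mr*s^2))^2 := by
      rw [hN, div_pow, lt_div_iff₀ (pow_pos hDpos 2)]
      push_cast
      have hpoly := odd_poly mr hmr
      rw [ht, hb, hs]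
      nlinarith [hpoly]
    linarith
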